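/- Every connected component of S_4 contains a parameter (a,b) for which the forward orbit of −a under P_{a,b} is unbounded; that is, every connected component of S_4 meets the escape locus S_4 \ C, where C is the connectedness locus of S_4. -/

import Mathlib

/-- The monic centered cubic polynomial `P_{a,b}(z) = z^3 - 3 a^2 z + b`. -/
noncomputable def cubicP (a b z : ℂ) : ℂ := z ^ 3 - 3 * a ^ 2 * z + b

/-- `z` has exact (minimal) period `n` under `f`. -/
def HasExactPeriod (f : ℂ → ℂ) (n : ℕ) (z : ℂ) : Prop :=
  f^[n] z = z ∧ ∀ k, 1 ≤ k → k < n → f^[k] z ≠ z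

/-- The curve `S_n` of parameters for which the critical point `a` has exact period `n`. -/
def Scurve (n : ℕ) : Set (ℂ × ℂ) :=
  {p | HasExactPeriod (cubicP p.1 p.2) n p.1}

/-!
Since `a` is a critical point of `P = P_{a,b}`, `P (a + t) = P a + t² (t + 3a)`. Expanding the orbit of
`a` with this identity gives `P⁴ a - a = (P² a - a) · Q(a, b)` with `Q ≡ 1` modulo `P² a - a`, so
`S₄ = {Q = 0}` is closed and each of its fibres over `a` is the zero set of a monic polynomial of degree
24 in `b`. By continuity of roots the projection `S₄ → ℂ, (a, b) ↦ a` is open. A compact component of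
the locally compact space `S₄` would have a compact open neighbourhood, whose projection would be a
nonempty compact open subset of `ℂ`; hence every component of `S₄` is unbounded.

On the other side, with `R = √(3|a|² + |b| + 2)` every `z` with `|z| ≥ R` satisfies `|P z| ≥ 2|z|`.
The periodic point `P a = b - 2a³` therefore lies in the disc of radius `R`, which bounds `|b|` by
`R + 2|a|³`; once `|(a, b)|` is large this places `P (-a) = 4a³ - P a` outside the disc, and `-a` escapes.
-/

open Set Bornology Polynomial

theorem exists_isCompact_isOpen_mem_of_isCompact_connectedComponent {Y : Type*}
    [TopologicalSpace Y] [WeaklyLocallyCompactSpace Y] [T2Space Y] {y : Y}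
    (hK : IsCompact (connectedComponent y)) : ∃ U : Set Y, IsCompact U ∧ IsOpen U ∧ y ∈ U := by
  obtain ⟨L, hL, hKL⟩ := exists_compact_superset hK
  have : CompactSpace L := isCompact_iff_compactSpace.mp hL
  let y' : L := ⟨y, interior_subset (hKL mem_connectedComponent)⟩
  have hdisj : (Subtype.val ⁻¹' (interior L)ᶜ) ∩
      ⋂ s : {s : Set L // IsClopen s ∧ y' ∈ s}, s.1 = ∅ := by
    rw [← connectedComponent_eq_iInter_isClopen, eq_empty_iff_forall_notMem]
    rintro z ⟨hzL, hz⟩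
    exact hzL (hKL (continuous_subtype_val.image_connectedComponent_subset y' ⟨z, hz, rfl⟩))
  obtain ⟨t, ht⟩ := (isOpen_interior.isClosed_compl.preimage continuous_subtype_val).isCompact
    |>.elim_finite_subfamily_closed _ (fun s => s.2.1.isClosed) hdisj
  obtain ⟨U, hU, hyU, hUint⟩ : ∃ U : Set L, IsClopen U ∧ y' ∈ U ∧ ∀ z ∈ U, z.1 ∈ interior L :=
    ⟨⋂ s ∈ t, s.1, isClopen_biInter_finset fun s _ => s.2.1, mem_iInter₂.2 fun s _ => s.2.2,
      fun z hz => by_contra fun h => (ht ▸ ⟨h, hz⟩ : z ∈ (∅ : Set L))⟩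
  obtain ⟨O, hO, rfl⟩ := isOpen_induced_iff.mp hU.isOpen
  refine ⟨Subtype.val '' (Subtype.val ⁻¹' O), hU.isClosed.isCompact.image continuous_subtype_val,
    ?_, y', hyU, rfl⟩
  convert hO.inter isOpen_interior using 1
  ext x
  constructor
  · rintro ⟨z, hz, rfl⟩
    exact ⟨hz, hUint z hz⟩
  · rintro ⟨hxO, hxL⟩
    exact ⟨⟨x, interior_subset hxL⟩, hxO, rfl⟩

theorem not_isCompact_connectedComponent_of_isOpenMap {X Y : Type*} [TopologicalSpace X]
    [T2Space X] [ConnectedSpace X] [NoncompactSpace X] [TopologicalSpace Y]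
    [WeaklyLocallyCompactSpace Y] [T2Space Y] {f : Y → X} (hf : Continuous f)
    (hfo : IsOpenMap f) (y : Y) : ¬ IsCompact (connectedComponent y) := by
  intro hK
  obtain ⟨U, hUc, hUo, hyU⟩ := exists_isCompact_isOpen_mem_of_isCompact_connectedComponent hK
  have hfU : f '' U = univ :=
    IsClopen.eq_univ ⟨(hUc.image hf).isClosed, hfo U hUo⟩ ⟨f y, y, hyU, rfl⟩
  exact noncompact_univ X (hfU ▸ hUc.image hf)

theorem not_isBounded_connectedComponentIn_of_isOpenMap {E X : Type*} [MetricSpace E]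
    [ProperSpace E] [TopologicalSpace X] [T2Space X] [ConnectedSpace X] [NoncompactSpace X]
    {V : Set E} (hV : IsClosed V) {f : V → X} (hf : Continuous f) (hfo : IsOpenMap f)
    {p : E} (hp : p ∈ V) : ¬ IsBounded (connectedComponentIn V p) := by
  have : LocallyCompactSpace V := hV.locallyCompactSpace
  intro hB
  rw [connectedComponentIn_eq_image hp] at hB
  refine not_isCompact_connectedComponent_of_isOpenMap hf hfo ⟨p, hp⟩ ?_
  rw [Subtype.isCompact_iff]
  exact Metric.isCompact_of_isClosed_isBounded
    (hV.isClosedEmbedding_subtypeVal.isClosedMap _ isClosed_connectedComponent) hB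

theorem Polynomial.Monic.exists_mem_roots_norm_sub_lt {K : Type*} [NormedField K] {p : K[X]}
    (hm : p.Monic) (hs : p.Splits) {z : K} {ε : ℝ} (hε : 0 ≤ ε)
    (h : ‖p.eval z‖ < ε ^ p.natDegree) : ∃ r ∈ p.roots, ‖z - r‖ < ε := by
  by_contra! hr
  refine h.not_ge ?_
  calc ε ^ p.natDegree = (p.roots.map fun _ => ε).prod := by
        simp [hs.natDegree_eq_card_roots]
    _ ≤ (p.roots.map fun r => ‖z - r‖).prod :=
        Multiset.prod_map_le_prod_map₀ _ _ (fun _ _ => hε) hr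
    _ = ‖p.eval z‖ := by
        rw [hs.eval_eq_prod_roots_of_monic hm, ← normHom_apply, map_multiset_prod,
          Multiset.map_map]
        rfl

theorem isOpenMap_fst_zeroLocus {X K : Type*} [TopologicalSpace X] [NormedField K]
    [IsAlgClosed K] (q : X → K[X]) {n : ℕ} (hm : ∀ x, (q x).Monic)
    (hn : ∀ x, (q x).natDegree = n) (hc : Continuous fun p : X × K => (q p.1).eval p.2) :
    IsOpenMap fun v : {p : X × K | (q p.1).eval p.2 = 0} => v.1.1 := by
  intro U hU
  obtain ⟨O, hO, rfl⟩ := isOpen_induced_iff.mp hU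
  rw [isOpen_iff_mem_nhds]
  rintro _ ⟨⟨⟨a₀, b₀⟩, hv⟩, hvO, rfl⟩
  obtain ⟨A, hA, B, hB, hAB⟩ := mem_nhds_prod_iff.mp (hO.mem_nhds hvO)
  obtain ⟨ε, hε, hεB⟩ := Metric.mem_nhds_iff.mp hB
  have hsmall : ∀ᶠ a in nhds a₀, ‖(q a).eval b₀‖ < ε ^ n := by
    have hcont : Continuous fun a => (q a).eval b₀ := hc.comp (Continuous.prodMk_left b₀)
    refine (hcont.norm.tendsto a₀).eventually (gt_mem_nhds ?_)
    simpa [show (q a₀).eval b₀ = 0 from hv] using pow_pos hε n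
  filter_upwards [hA, hsmall] with a haA ha
  obtain ⟨r, hr, hrb⟩ := (hm a).exists_mem_roots_norm_sub_lt (IsAlgClosed.splits _) hε.le
    (by rwa [hn])
  refine ⟨⟨(a, r), (mem_roots'.mp hr).2⟩, hAB ⟨haA, hεB ?_⟩, rfl⟩
  rwa [Metric.mem_ball, dist_eq_norm, norm_sub_rev]

-- With `c = P a`, `h = P² a - a` and `u = P³ a - P a`, this is `(P⁴ a - a) / (P² a - a)`.
def period4Factor {R : Type*} [CommRing R] (a b : R) : R :=
  let c := b - 2 * a ^ 3
  let h := c ^ 3 - 3 * a ^ 2 * c + b - a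
  let u := h ^ 2 * (h + 3 * a)
  1 + h * ((h + 3 * a) * (3 * c ^ 2 - 3 * a ^ 2 + 3 * c * u + u ^ 2))

section Period4Factor

variable {R : Type*} [CommRing R]

theorem eval_period4Factor (a b : R) : (period4Factor (C a) X).eval b = period4Factor a b := by
  simp [period4Factor]

theorem continuous_period4Factor [TopologicalSpace R] [IsTopologicalRing R] :
    Continuous fun p : R × R => period4Factor p.1 p.2 := by
  unfold period4Factor
  fun_prop

theorem monic_period4Factor [Nontrivial R] (a : R) : (period4Factor (C a) X).Monic := by
  simp only [period4Factor]
  monicity!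

theorem natDegree_period4Factor [Nontrivial R] (a : R) :
    (period4Factor (C a) X).natDegree = 24 := by
  simp only [period4Factor]
  compute_degree!

end Period4Factor

theorem cubicP_self (a b : ℂ) : cubicP a b a = b - 2 * a ^ 3 := by
  unfold cubicP; ring

theorem cubicP_add (a b y t : ℂ) :
    cubicP a b (y + t) = cubicP a b y + t * (3 * y ^ 2 - 3 * a ^ 2 + 3 * y * t + t ^ 2) := by
  unfold cubicP; ring

theorem cubicP_iterate_four_sub (a b : ℂ) :
    (cubicP a b)^[4] a - a = ((cubicP a b)^[2] a - a) * period4Factor a b := by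
  simp only [Function.iterate_succ_apply', Function.iterate_zero_apply, cubicP_self]
  set c := b - 2 * a ^ 3
  set h := cubicP a b c - a with hh
  set u := h ^ 2 * (h + 3 * a)
  have e2 : cubicP a b c = a + h := by rw [hh]; ring
  have e3 : cubicP a b (a + h) = c + u := by rw [cubicP_add, cubicP_self]; ring
  have e4 : cubicP a b (c + u) = a + h + u * (3 * c ^ 2 - 3 * a ^ 2 + 3 * c * u + u ^ 2) := by
    rw [cubicP_add, e2]
  rw [e2, e3, e4]
  change _ = h * (1 + h * ((h + 3 * a) * (3 * c ^ 2 - 3 * a ^ 2 + 3 * c * u + u ^ 2)))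
  ring

theorem hasExactPeriod_four_iff {f : ℂ → ℂ} {z : ℂ} :
    HasExactPeriod f 4 z ↔ f^[4] z = z ∧ f^[2] z ≠ z := by
  refine ⟨fun h => ⟨h.1, h.2 2 (by norm_num) (by norm_num)⟩, fun ⟨h4, h2⟩ => ⟨h4, ?_⟩⟩
  intro k hk1 hk4 hk
  apply h2
  interval_cases k
  · exact Function.IsPeriodicPt.mul_const hk 2
  · exact hk
  · exact (Function.IsPeriodicPt.sub h4 hk).mul_const 2

theorem period4Factor_eq_one {a b : ℂ} (h : (cubicP a b)^[2] a = a) : period4Factor a b = 1 := by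
  rw [Function.iterate_succ_apply', Function.iterate_one, cubicP_self, ← sub_eq_zero] at h
  change 1 + (cubicP a b (b - 2 * a ^ 3) - a) * _ = 1
  rw [h, zero_mul, add_zero]

theorem scurve_four_eq : Scurve 4 = {p | period4Factor p.1 p.2 = 0} := by
  ext ⟨a, b⟩
  simp only [Scurve, Set.mem_ofPred_eq, hasExactPeriod_four_iff]
  rw [← sub_eq_zero (a := (cubicP a b)^[4] a), cubicP_iterate_four_sub, mul_eq_zero, sub_eq_zero]
  constructor
  · rintro ⟨h | h, h2⟩
    exacts [absurd h h2, h]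
  · intro hQ
    exact ⟨Or.inr hQ, fun h2 => one_ne_zero ((period4Factor_eq_one h2).symm.trans hQ)⟩

noncomputable def escapeRadius (a b : ℂ) : ℝ := √(3 * ‖a‖ ^ 2 + ‖b‖ + 2)

section Escape

variable {a b z : ℂ}

theorem escapeRadius_sq (a b : ℂ) : escapeRadius a b ^ 2 = 3 * ‖a‖ ^ 2 + ‖b‖ + 2 :=
  Real.sq_sqrt (by positivity)

theorem one_le_escapeRadius (a b : ℂ) : 1 ≤ escapeRadius a b :=
  Real.one_le_sqrt.mpr (by nlinarith [norm_nonneg a, norm_nonneg b])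

theorem two_mul_norm_le_norm_cubicP (hz : escapeRadius a b ≤ ‖z‖) :
    2 * ‖z‖ ≤ ‖cubicP a b z‖ := by
  have hz1 : 1 ≤ ‖z‖ := (one_le_escapeRadius a b).trans hz
  have hz2 : 3 * ‖a‖ ^ 2 + ‖b‖ + 2 ≤ ‖z‖ ^ 2 := by
    rw [← escapeRadius_sq]
    exact pow_le_pow_left₀ (by linarith [one_le_escapeRadius a b]) hz 2
  have hlin : ‖3 * a ^ 2 * z - b‖ ≤ 3 * ‖a‖ ^ 2 * ‖z‖ + ‖b‖ := by
    refine (norm_sub_le _ _).trans_eq ?_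
    simp [norm_pow]
  calc 2 * ‖z‖ ≤ ‖z‖ ^ 3 - (3 * ‖a‖ ^ 2 * ‖z‖ + ‖b‖) := by
        nlinarith [mul_le_mul_of_nonneg_left hz2 (norm_nonneg z),
          mul_nonneg (norm_nonneg b) (sub_nonneg.mpr hz1)]
    _ ≤ ‖z ^ 3‖ - ‖3 * a ^ 2 * z - b‖ := by rw [norm_pow]; linarith
    _ ≤ ‖cubicP a b z‖ := by
        rw [show cubicP a b z = z ^ 3 - (3 * a ^ 2 * z - b) by unfold cubicP; ring]
        exact norm_sub_norm_le _ _

theorem pow_two_mul_norm_le_norm_iterate_cubicP (hz : escapeRadius a b ≤ ‖z‖) (m : ℕ) :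
    2 ^ m * ‖z‖ ≤ ‖(cubicP a b)^[m] z‖ := by
  induction m with
  | zero => simp
  | succ m ih =>
    have hR : escapeRadius a b ≤ ‖(cubicP a b)^[m] z‖ :=
      hz.trans (le_mul_of_one_le_left (norm_nonneg z) (one_le_pow₀ one_le_two) |>.trans ih)
    rw [Function.iterate_succ_apply', pow_succ']
    linarith [two_mul_norm_le_norm_cubicP hR]

theorem not_isBounded_orbit_cubicP (hz : escapeRadius a b ≤ ‖z‖) :
    ¬ IsBounded (range fun m : ℕ => (cubicP a b)^[m] z) := by
  rintro hB
  obtain ⟨C, hC⟩ := hB.exists_norm_le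
  obtain ⟨m, hm⟩ := pow_unbounded_of_one_lt C one_lt_two
  have hz1 : 1 ≤ ‖z‖ := (one_le_escapeRadius a b).trans hz
  have := pow_two_mul_norm_le_norm_iterate_cubicP hz m
  nlinarith [hC _ (mem_range_self m), pow_pos (two_pos (α := ℝ)) m]

theorem norm_lt_escapeRadius_of_isPeriodicPt {n : ℕ} (hn : 0 < n)
    (h : Function.IsPeriodicPt (cubicP a b) n z) : ‖z‖ < escapeRadius a b := by
  by_contra! hz
  have hz0 : 0 < ‖z‖ := zero_lt_one.trans_le ((one_le_escapeRadius a b).trans hz)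
  have := pow_two_mul_norm_le_norm_iterate_cubicP hz n
  rw [h.eq] at this
  nlinarith [one_lt_pow₀ (one_lt_two (α := ℝ)) hn.ne']

theorem norm_cubicP_self_lt_escapeRadius (h4 : (cubicP a b)^[4] a = a) :
    ‖cubicP a b a‖ < escapeRadius a b :=
  norm_lt_escapeRadius_of_isPeriodicPt four_pos (Function.IsPeriodicPt.apply h4)

theorem escapeRadius_le_two_mul_norm_pow_three (h4 : (cubicP a b)^[4] a = a)
    (h : 22 < ‖(a, b)‖) : escapeRadius a b ≤ 2 * ‖a‖ ^ 3 := by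
  have hR := escapeRadius_sq a b
  have hb : ‖b‖ < escapeRadius a b + 2 * ‖a‖ ^ 3 := by
    calc ‖b‖ ≤ ‖cubicP a b a‖ + ‖2 * a ^ 3‖ := by
          rw [cubicP_self]; exact norm_le_norm_sub_add _ _
      _ < _ := by
          rw [norm_mul, norm_pow, Complex.norm_two]
          linarith [norm_cubicP_self_lt_escapeRadius h4]
  have hs : 2 ≤ ‖a‖ := by
    by_contra! hs
    have hβ : 22 < ‖b‖ := by
      rw [Prod.norm_def] at h
      exact (lt_max_iff.mp h).resolve_left (by linarith)
    have : ‖a‖ ^ 3 < 8 := by nlinarith [norm_nonneg a]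
    nlinarith [norm_nonneg a]
  by_contra! hlt
  have h8 : 8 ≤ ‖a‖ ^ 3 := by nlinarith
  nlinarith [mul_lt_mul'' hlt (show 2 * ‖a‖ ^ 3 - 1 < escapeRadius a b - 1 by linarith)
    (by linarith) (by linarith)]

theorem escapeRadius_le_norm_cubicP_neg (h4 : (cubicP a b)^[4] a = a) (h : 22 < ‖(a, b)‖) :
    escapeRadius a b ≤ ‖cubicP a b (-a)‖ := by
  have hPa := norm_cubicP_self_lt_escapeRadius h4
  have hR := escapeRadius_le_two_mul_norm_pow_three h4 h
  calc escapeRadius a b ≤ ‖4 * a ^ 3‖ - ‖cubicP a b a‖ := by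
        rw [norm_mul, norm_pow, show ‖(4 : ℂ)‖ = 4 by norm_num]
        linarith
    _ ≤ ‖4 * a ^ 3 + cubicP a b a‖ := norm_sub_le_norm_add _ _
    _ = ‖cubicP a b (-a)‖ := by
        rw [cubicP_self]; unfold cubicP; ring_nf

end Escape

theorem not_isBounded_connectedComponentIn_scurve_four {p : ℂ × ℂ} (hp : p ∈ Scurve 4) :
    ¬ IsBounded (connectedComponentIn (Scurve 4) p) := by
  have hV : Scurve 4 = {p : ℂ × ℂ | (period4Factor (C p.1) X).eval p.2 = 0} := by
    simp only [scurve_four_eq, eval_period4Factor]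
  have hc : Continuous fun p : ℂ × ℂ => (period4Factor (C p.1) X).eval p.2 := by
    simpa only [eval_period4Factor] using continuous_period4Factor
  rw [hV] at hp ⊢
  exact not_isBounded_connectedComponentIn_of_isOpenMap (isClosed_eq hc continuous_const)
    (continuous_fst.comp continuous_subtype_val)
    (isOpenMap_fst_zeroLocus _ monic_period4Factor natDegree_period4Factor hc) hp

theorem not_isBounded_orbit_neg {a b : ℂ} (h4 : (cubicP a b)^[4] a = a) (h : 22 < ‖(a, b)‖) :
    ¬ IsBounded (range fun m : ℕ => (cubicP a b)^[m] (-a)) := by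
  refine fun hB => not_isBounded_orbit_cubicP (escapeRadius_le_norm_cubicP_neg h4 h) (hB.subset ?_)
  rintro _ ⟨m, rfl⟩
  exact ⟨m + 1, Function.iterate_succ_apply _ _ _⟩

theorem stmt_12 :
    ∀ p ∈ Scurve 4, ∃ q ∈ connectedComponentIn (Scurve 4) p,
      ¬ Bornology.IsBounded (Set.range fun m : ℕ => (cubicP q.1 q.2)^[m] (-q.1)) := by
  intro p hp
  obtain ⟨q, hq, hq22⟩ : ∃ q ∈ connectedComponentIn (Scurve 4) p, 22 < ‖q‖ := by
    by_contra! h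
    exact not_isBounded_connectedComponentIn_scurve_four hp
      (Metric.isBounded_closedBall.subset fun q hq => mem_closedBall_zero_iff.mpr (h q hq))
  exact ⟨q, hq, not_isBounded_orbit_neg (connectedComponentIn_subset _ _ hq).1 hq22⟩
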